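/- arXiv:1804.02622 — 4 statements merged into one kernel-verified Lean document; each statement's English description precedes it below -/
import Mathlib

section
/- Let α ∈ (0, 1/2) be a real number and let b : ℕ → ℕ satisfy b(N) ≥ 2 for all N and b(N)/√(log N) → 0 as N → ∞. Then there exists N₀ such that for every integer N ≥ N₀ the following holds: for every load balancing algorithm on the N-server state space with parameter b = b(N) that satisfies A₁(s) ≤ 1/√N for every state s ∈ 𝒮 with s₁ ≤ λ + k·log N/√N, and for every stationary distribution π of the associated Markov chain, one has E_π[ max{ Σ_{i=1}^{b} S_i − λ − k·log N/√N, 0 } ] ≤ 29·b/(√N · log N). -/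
open Filter

noncomputable section

/-- `λ = 1 - N^{-α}`. -/
def lam (α : ℝ) (N : ℕ) : ℝ := 1 - (N : ℝ) ^ (-α)

/-- `k = 1 + 1/(2(b-1))`. -/
def kcoef (b : ℕ) : ℝ := 1 + 1 / (2 * ((b : ℝ) - 1))

/-- The threshold `λ + k log N / √N`. -/
def thr (α : ℝ) (N b : ℕ) : ℝ := lam α N + kcoef b * Real.log N / Real.sqrt N

/-- Membership in the state space `𝒮`, encoded with the conventions `s 0 = 1` and
`s i = 0` for `i > b`; the actual coordinates are `s 1 ≥ ⋯ ≥ s b`. -/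
def IsState (N b : ℕ) (s : ℕ → ℝ) : Prop :=
  s 0 = 1 ∧ (∀ i, b < i → s i = 0) ∧ (∀ i, i ≤ b → s (i + 1) ≤ s i) ∧
    ∀ i, ∃ m : ℤ, (N : ℝ) * s i = (m : ℝ)

/-- The state space `𝒮`. -/
def State (N b : ℕ) : Type := {s : ℕ → ℝ // IsState N b s}

/-- The vector `e_i` whose `i`-th coordinate is `1/N` and whose other coordinates are `0`. -/
def evec (N i : ℕ) : ℕ → ℝ := fun j => if j = i then 1 / (N : ℝ) else 0

/-- A load balancing algorithm: routing probabilities `A_0 = 1 ≥ A_1 ≥ ⋯ ≥ A_b ≥ 0`,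
with `A_{i-1}(s) = A_i(s)` whenever `s_{i-1} = s_i`. -/
structure Algo (N b : ℕ) where
  A : ℕ → (ℕ → ℝ) → ℝ
  a_zero : ∀ s : State N b, A 0 s.val = 1
  a_mono : ∀ s : State N b, ∀ i, 1 ≤ i → i ≤ b → A i s.val ≤ A (i - 1) s.val
  a_nonneg : ∀ s : State N b, 0 ≤ A b s.val
  a_eq : ∀ s : State N b, ∀ i, 1 ≤ i → i ≤ b → s.val (i - 1) = s.val i →
    A (i - 1) s.val = A i s.val

/-- The generator `G` of the Markov chain. -/
def gen (N b : ℕ) (α : ℝ) (alg : Algo N b) (g : (ℕ → ℝ) → ℝ) (s : ℕ → ℝ) : ℝ :=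
  ∑ i ∈ Finset.Icc 1 b,
    (lam α N * (N : ℝ) * (alg.A (i - 1) s - alg.A i s) * (g (s + evec N i) - g s)
      + (N : ℝ) * (s i - s (i + 1)) * (g (s - evec N i) - g s))

/-- A stationary distribution of the chain. -/
def IsStationaryLB (N b : ℕ) (α : ℝ) (alg : Algo N b) (μ : State N b → ℝ) : Prop :=
  (∀ s, 0 ≤ μ s ∧ μ s ≤ 1) ∧ (∑' s : State N b, μ s) = 1 ∧
    ∀ g : (ℕ → ℝ) → ℝ, (∑' s : State N b, μ s * gen N b α alg g s.val) = 0

/-- The condition `A₁(s) ≤ 1/√N` whenever `s₁ ≤ λ + k log N/√N`. -/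
def GoodAlgo (N b : ℕ) (α : ℝ) (alg : Algo N b) : Prop :=
  ∀ s : State N b, s.val 1 ≤ thr α N b → alg.A 1 s.val ≤ 1 / Real.sqrt N


/-!
With `Q = λ + k log N / √N` and `c = √N log N / 8`, take the Lyapunov function
`V(s) = ((∑ sᵢ - Q)⁺)² + K₁ exp (c ∑ sᵢ) + K₂ exp (c ∑_{i ≥ 2} sᵢ)`. Its generator has mean zero
under a stationary distribution, so the pointwise drift bound
`G V ≤ -(2 log N / √N) (∑ sᵢ - Q)⁺ + 58 b / N` gives the claim.

When `s₁ ≥ λ + log N / √N`, departures exceed arrivals by `√N log N`: the quadratic term has the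
required negative drift and the term `exp (c ∑ sᵢ)` drifts down steeply, which pays for the tail
term once `s₁ > Q`. When `s₁ < λ + log N / √N`, an excess of `∑ sᵢ` over `Q` has to sit in the tail
`∑_{i ≥ 2} sᵢ`; there `A₁ ≤ 1 / √N`, so few arrivals join busy servers and the tail term drifts
down fast enough to absorb the quadratic one.
-/

open Real Finset

namespace State

variable {N b : ℕ} (s : State N b)

lemma antitone : Antitone s.val := by
  refine antitone_nat_of_succ_le fun i => ?_
  by_cases hi : i ≤ b
  · exact s.prop.2.2.1 i hi
  · rw [s.prop.2.1 i (by omega), s.prop.2.1 (i + 1) (by omega)]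

lemma nonneg (i : ℕ) : 0 ≤ s.val i := by
  rw [← s.prop.2.1 (max i (b + 1)) (by omega)]
  exact s.antitone (le_max_left _ _)

lemma le_one (i : ℕ) : s.val i ≤ 1 :=
  s.prop.1 ▸ s.antitone (Nat.zero_le i)

lemma finite (hN : 0 < N) : Finite (State N b) := by
  let grid : Finset ℝ := (range (N + 1)).image fun m : ℕ => (m : ℝ) / N
  have mem_grid (s : State N b) (i : ℕ) : s.val i ∈ grid := by
    obtain ⟨m, hm⟩ := s.prop.2.2.2 i
    have hN' : (0 : ℝ) < N := by exact_mod_cast hN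
    have hm0 : (0 : ℝ) ≤ m := hm ▸ mul_nonneg hN'.le (s.nonneg i)
    have hmN : (m : ℝ) ≤ N := hm ▸ mul_le_of_le_one_right hN'.le (s.le_one i)
    refine mem_image.mpr ⟨m.toNat, mem_range.mpr ?_, ?_⟩
    · have : m ≤ N := by exact_mod_cast hmN
      omega
    · have : ((m.toNat : ℕ) : ℝ) = m := by
        exact_mod_cast Int.toNat_of_nonneg (by exact_mod_cast hm0)
      rw [this, ← hm, mul_div_cancel_left₀ _ hN'.ne']
  refine Finite.of_injective (fun s (i : Fin (b + 1)) => (⟨s.val i, mem_grid s i⟩ : grid)) ?_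
  intro s t hst
  apply Subtype.ext
  funext i
  by_cases hi : i ≤ b
  · exact congrArg Subtype.val (congrFun hst ⟨i, by omega⟩)
  · rw [s.prop.2.1 i (by omega), t.prop.2.1 i (by omega)]

end State

lemma one_le_of_hundred_le_log {N : ℕ} (hL : 100 ≤ log N) : 1 ≤ N := by
  rcases N with _ | N
  · simp at hL; linarith
  · omega

lemma Algo.A_anti {N b : ℕ} (alg : Algo N b) (s : State N b) {i j : ℕ} (hij : i ≤ j) (hj : j ≤ b) :
    alg.A j s.val ≤ alg.A i s.val := by
  induction j, hij using Nat.le_induction with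
  | base => rfl
  | succ j hij ih => exact (alg.a_mono s (j + 1) (by omega) hj).trans (ih (by omega))

/-- Expected change of `f` at `x` under jumps `x ↦ x + h` at rate `up` and `x ↦ x - h` at rate
`down`. -/
def upDownDrift (f : ℝ → ℝ) (up down h x : ℝ) : ℝ :=
  up * (f (x + h) - f x) + down * (f (x - h) - f x)

lemma gen_add {N b : ℕ} {α : ℝ} (alg : Algo N b) (f g : (ℕ → ℝ) → ℝ) (v : ℕ → ℝ) :
    gen N b α alg (fun w => f w + g w) v = gen N b α alg f v + gen N b α alg g v := by
  simp only [gen, ← sum_add_distrib]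
  exact sum_congr rfl fun _ _ => by ring

/-- The `i`-th transitions of `gen` move `s_i` by `± 1 / N`, so they change `∑_{j ≤ i' ≤ b} s_{i'}`
exactly when `j ≤ i`; the rates of these transitions telescope. -/
lemma gen_comp_sum_Icc {N b : ℕ} {α : ℝ} (alg : Algo N b) (φ : ℝ → ℝ) (v : ℕ → ℝ) {j : ℕ}
    (hj : 1 ≤ j) (hjb : j ≤ b) :
    gen N b α alg (fun w => φ (∑ i ∈ Icc j b, w i)) v =
      upDownDrift φ (lam α N * N * (alg.A (j - 1) v - alg.A b v)) (N * (v j - v (b + 1)))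
        (1 / N) (∑ i ∈ Icc j b, v i) := by
  have shift_add (i : ℕ) : ∑ k ∈ Icc j b, (v + evec N i) k =
      ∑ k ∈ Icc j b, v k + if i ∈ Icc j b then 1 / (N : ℝ) else 0 := by
    simp [sum_add_distrib, evec]
  have shift_sub (i : ℕ) : ∑ k ∈ Icc j b, (v - evec N i) k =
      ∑ k ∈ Icc j b, v k - if i ∈ Icc j b then 1 / (N : ℝ) else 0 := by
    simp [sum_sub_distrib, evec]
  have tel_A : ∑ i ∈ Icc j b, (alg.A (i - 1) v - alg.A i v) = alg.A (j - 1) v - alg.A b v := by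
    have := sum_Icc_sub hjb fun i => -alg.A (i - 1) v
    simp only [add_tsub_cancel_right, sub_neg_eq_add] at this
    rw [← neg_add_eq_sub, ← this]
    exact sum_congr rfl fun _ _ => by ring
  have tel_v : ∑ i ∈ Icc j b, (v i - v (i + 1)) = v j - v (b + 1) := by
    have := sum_Icc_sub hjb fun i => -v i
    simp only [sub_neg_eq_add] at this
    rw [← neg_add_eq_sub, ← this]
    exact sum_congr rfl fun _ _ => by ring
  rw [gen, ← sum_subset (Icc_subset_Icc_left hj) fun i _ hi => by
      simp only [shift_add, shift_sub, if_neg hi, add_zero, sub_zero, sub_self, mul_zero],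
    sum_congr rfl fun i hi => by rw [shift_add, shift_sub, if_pos hi]]
  simp only [sum_add_distrib, ← sum_mul, ← mul_sum, tel_A, tel_v, upDownDrift]

lemma upDownDrift_add (f g : ℝ → ℝ) (up down h x : ℝ) :
    upDownDrift (fun y => f y + g y) up down h x =
      upDownDrift f up down h x + upDownDrift g up down h x := by
  simp only [upDownDrift]
  ring

lemma upDownDrift_const_mul_exp (K c up down h x : ℝ) :
    upDownDrift (fun y => K * exp (c * y)) up down h x =
      K * exp (c * x) * (up * (exp (c * h) - 1) - down * (1 - exp (-(c * h)))) := by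
  simp only [upDownDrift, mul_add, mul_sub, exp_add, exp_sub, exp_neg]
  field_simp
  ring

lemma upDownDrift_sq_posPart_le {Q up down : ℝ} (h x : ℝ) (hup : 0 ≤ up) (hdown : 0 ≤ down) :
    upDownDrift (fun y => max (y - Q) 0 ^ 2) up down h x ≤
      2 * h * max (x - Q) 0 * (up - down) + (up + down) * h ^ 2 := by
  have step (t : ℝ) : max (x + t - Q) 0 ^ 2 ≤ (max (x - Q) 0 + t) ^ 2 := by
    rcases le_total (x + t - Q) 0 with ht | ht
    · rw [max_eq_right ht]
      nlinarith [sq_nonneg (max (x - Q) 0 + t)]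
    · rw [max_eq_left ht]
      exact pow_le_pow_left₀ ht (by linarith [le_max_left (x - Q) 0]) 2
  have h_up := mul_le_mul_of_nonneg_left (step h) hup
  have h_down := mul_le_mul_of_nonneg_left (step (-h)) hdown
  rw [← sub_eq_add_neg] at h_down
  simp only [upDownDrift]
  nlinarith

lemma exp_sub_one_le_two_mul {θ : ℝ} (h0 : 0 ≤ θ) (h1 : θ ≤ 1) : exp θ - 1 ≤ 2 * θ := by
  have := abs_exp_sub_one_le (x := θ) (by rwa [abs_of_nonneg h0])
  rw [abs_of_nonneg h0] at this
  exact (le_abs_self _).trans this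

lemma half_le_one_sub_exp_neg {θ : ℝ} (h0 : 0 ≤ θ) (h1 : θ ≤ 1 / 2) : θ / 2 ≤ 1 - exp (-θ) := by
  have := abs_exp_sub_one_sub_id_le (x := -θ) (by rw [abs_neg, abs_of_nonneg h0]; linarith)
  nlinarith [le_abs_self (exp (-θ) - 1 - -θ), mul_nonneg h0 (by linarith : 0 ≤ 1 / 2 - θ)]

lemma tsum_mul_le_of_drift_le {ι : Type*} [Finite ι] {μ G f : ι → ℝ} {a B : ℝ}
    (hμ : ∀ i, 0 ≤ μ i) (hμ_one : ∑' i, μ i = 1) (hG : ∑' i, μ i * G i = 0) (ha : 0 < a)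
    (hGf : ∀ i, G i ≤ -a * f i + B) :
    ∑' i, μ i * f i ≤ B / a := by
  have : 0 ≤ -a * ∑' i, μ i * f i + B := by
    calc (0 : ℝ) = ∑' i, μ i * G i := hG.symm
    _ ≤ ∑' i, (-a * (μ i * f i) + B * μ i) :=
        Summable.of_finite.tsum_le_tsum
          (fun i => by nlinarith [mul_le_mul_of_nonneg_left (hGf i) (hμ i)]) Summable.of_finite
    _ = -a * ∑' i, μ i * f i + B := by
        rw [Summable.of_finite.tsum_add Summable.of_finite, tsum_mul_left, tsum_mul_left, hμ_one,
          mul_one]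
  rw [le_div_iff₀ ha]
  linarith

/-- The scales `n = N`, `R = √N`, `L = log N`, `B = b` and the load `λ` of a system with
`N` servers that is large enough for the drift bound `Regime.Admissible.drift_le`. -/
structure Regime where
  n : ℝ
  R : ℝ
  L : ℝ
  B : ℝ
  load : ℝ
  R_mul_R : R * R = n
  exp_L : exp L = n
  hundred_le_L : 100 ≤ L
  L_le_R : L ≤ R
  two_le_B : 2 ≤ B
  hundred_mul_B_sq_le_L : 100 * B ^ 2 ≤ L
  load_nonneg : 0 ≤ load
  load_le_one : load ≤ 1

namespace Regime

variable (P : Regime)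

def θ : ℝ := P.L / (8 * P.R)

def β : ℝ := exp P.θ - 1

def γ : ℝ := 1 - exp (-P.θ)

/-- Chosen so that a jump of size `1 / n` multiplies `exp (c x)` by `exp (± θ)`. -/
def c : ℝ := P.θ * P.n

def q : ℝ := P.load + P.L / P.R

def M : ℝ := P.L / (2 * (P.B - 1) * P.R)

def Q : ℝ := P.q + P.M

def d : ℝ := P.n * P.M / (2 * (P.B - 1))

/-- Normalised by `K₂_mul`: below `M / 2` the tail term gains at most `28 B / n`. -/
def K₂ : ℝ := 28 * P.B / (P.n * (P.β * P.R * exp (P.c * (P.M / 2))))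

/-- Normalised by `K₁_mul`: above `Q` the term `K₁ exp (c ∑ sᵢ)` loses twice what the tail term
can gain. -/
def K₁ : ℝ := 2 * P.K₂ * P.β * P.n / (P.L ^ 2 / 32 * exp (P.c * P.Q))

def φ : ℝ → ℝ := fun x => max (x - P.Q) 0 ^ 2 + P.K₁ * exp (P.c * x)

def ψ : ℝ → ℝ := fun x => P.K₂ * exp (P.c * x)

lemma n_pos : 0 < P.n := P.exp_L ▸ exp_pos _

lemma L_pos : 0 < P.L := by linarith [P.hundred_le_L]

lemma R_pos : 0 < P.R := P.L_pos.trans_le P.L_le_R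

lemma one_le_n : 1 ≤ P.n := P.exp_L ▸ one_le_exp P.L_pos.le

lemma B_sub_one_pos : 0 < P.B - 1 := by linarith [P.two_le_B]

lemma θ_pos : 0 < P.θ := div_pos P.L_pos (by linarith [P.R_pos])

lemma θ_le : P.θ ≤ 1 / 8 := by
  rw [θ, div_le_iff₀ (by linarith [P.R_pos])]
  linarith [P.L_le_R]

lemma c_mul_inv_n : P.c * (1 / P.n) = P.θ := by
  rw [c]
  field_simp [P.n_pos.ne']

lemma c_eq : P.c = P.R * P.L / 8 := by
  rw [c, θ, ← P.R_mul_R]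
  field_simp [P.R_pos.ne']

lemma c_pos : 0 < P.c := P.c_eq ▸ by have := P.R_pos; have := P.L_pos; positivity

lemma θ_le_β : P.θ ≤ P.β := by rw [β]; linarith [add_one_le_exp P.θ]

lemma β_pos : 0 < P.β := P.θ_pos.trans_le P.θ_le_β

lemma β_le : P.β ≤ 2 * P.θ := exp_sub_one_le_two_mul P.θ_pos.le (by linarith [P.θ_le])

lemma γ_le_θ : P.γ ≤ P.θ := by rw [γ]; linarith [add_one_le_exp (-P.θ)]

lemma half_θ_le_γ : P.θ / 2 ≤ P.γ := half_le_one_sub_exp_neg P.θ_pos.le (by linarith [P.θ_le])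

lemma γ_pos : 0 < P.γ := by linarith [P.half_θ_le_γ, P.θ_pos]

lemma β_sub_γ : P.β - P.γ = P.β * P.γ := by
  have : exp P.θ * exp (-P.θ) = 1 := by rw [← exp_add, add_neg_cancel, exp_zero]
  rw [β, γ]
  linear_combination this

lemma β_mul_R_le : P.β * P.R ≤ P.L / 4 := by
  have : 2 * P.θ * P.R = P.L / 4 := by rw [θ]; field_simp [P.R_pos.ne']; ring
  nlinarith [P.β_le, P.R_pos]

lemma M_pos : 0 < P.M := by
  have := P.B_sub_one_pos; have := P.R_pos; have := P.L_pos
  rw [M]; positivity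

lemma d_pos : 0 < P.d := by
  have := P.B_sub_one_pos; have := P.M_pos; have := P.n_pos
  rw [d]; positivity

lemma L_le_γ_mul_d : P.L ≤ P.γ * P.d := by
  have hd : P.θ / 2 * P.d = P.L ^ 2 / (64 * (P.B - 1) ^ 2) := by
    rw [θ, d, M, ← P.R_mul_R]; field_simp [P.R_pos.ne', P.B_sub_one_pos.ne']; ring
  have : P.L ≤ P.L ^ 2 / (64 * (P.B - 1) ^ 2) := by
    rw [le_div_iff₀ (by nlinarith [P.B_sub_one_pos])]
    nlinarith [P.hundred_mul_B_sq_le_L, P.two_le_B, P.L_pos]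
  nlinarith [P.half_θ_le_γ, P.d_pos]

lemma sq_n_le_exp : P.n ^ 2 ≤ exp (P.c * (P.M / 2)) := by
  have hcM : P.c * (P.M / 2) = P.L ^ 2 / (32 * (P.B - 1)) := by
    rw [c_eq, M]; field_simp [P.R_pos.ne', P.B_sub_one_pos.ne']; ring
  have : 2 * P.L ≤ P.c * (P.M / 2) := by
    rw [hcM, le_div_iff₀ (by nlinarith [P.B_sub_one_pos])]
    nlinarith [P.hundred_mul_B_sq_le_L, P.two_le_B, P.L_pos]
  calc P.n ^ 2 = exp (2 * P.L) := by rw [mul_comm, exp_mul, P.exp_L]; norm_cast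
  _ ≤ _ := exp_le_exp.mpr this

lemma n_le_exp_c_mul_half_M : P.n ≤ exp (P.c * (P.M / 2)) := by
  nlinarith [P.sq_n_le_exp, P.one_le_n]

lemma exp_c_mul_M : exp (P.c * P.M) = exp (P.c * (P.M / 2)) * exp (P.c * (P.M / 2)) := by
  rw [← exp_add]; ring_nf

lemma exp_c_mul_Q : exp (P.c * P.Q) = exp (P.c * P.q) * exp (P.c * P.M) := by
  rw [Q, mul_add, exp_add]

lemma K₂_pos : 0 < P.K₂ := by
  have := P.β_pos; have := P.R_pos; have := P.n_pos; have : 0 < P.B := by linarith [P.two_le_B]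
  rw [K₂]; positivity

lemma K₁_pos : 0 < P.K₁ := by
  have := P.β_pos; have := P.n_pos; have := P.K₂_pos; have := P.L_pos
  exact div_pos (by positivity) (by positivity)

lemma K₂_mul : P.K₂ * (P.β * P.R) * exp (P.c * (P.M / 2)) = 28 * P.B / P.n := by
  have := P.β_pos; have := P.R_pos; have := P.n_pos
  rw [K₂]; field_simp

lemma K₁_mul : P.K₁ * (P.L ^ 2 / 32) * exp (P.c * P.Q) = 2 * P.K₂ * P.β * P.n := by
  have := P.L_pos
  rw [K₁]; field_simp

lemma four_le_β_mul_R : 4 ≤ P.β * P.R := by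
  have : P.θ * P.R = P.L / 8 := by rw [θ]; field_simp [P.R_pos.ne']
  nlinarith [P.θ_le_β, P.R_pos, P.hundred_le_L]

lemma n_le_exp_c_mul_M : P.n ≤ exp (P.c * P.M) := by
  rw [exp_c_mul_M]
  nlinarith [P.n_le_exp_c_mul_half_M, P.one_le_n]

lemma K₁_mul_exp_c_mul_q_le : P.K₁ * (P.R * P.L / 4) * exp (P.c * P.q) ≤ 4 * P.K₂ := by
  have hK : P.K₁ * (P.R * P.L / 4) * exp (P.c * P.q) * exp (P.c * P.M) * P.L =
      16 * P.K₂ * (P.β * P.R) * P.n := by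
    have := P.K₁_mul
    rw [exp_c_mul_Q] at this
    linear_combination (8 * P.R) * this
  have hβR : 16 * P.K₂ * (P.β * P.R) * P.n ≤ 4 * P.K₂ * exp (P.c * P.M) * P.L := by
    have := mul_le_mul_of_nonneg_left P.β_mul_R_le (by nlinarith [P.K₂_pos, P.n_pos] :
      0 ≤ 16 * P.K₂ * P.n)
    nlinarith [mul_le_mul_of_nonneg_left P.n_le_exp_c_mul_M
      (by nlinarith [P.K₂_pos, P.L_pos] : 0 ≤ 4 * P.K₂ * P.L)]
  exact le_of_mul_le_mul_right (le_of_mul_le_mul_right (hK ▸ hβR) P.L_pos) (exp_pos _)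

lemma four_mul_B_le : 4 * P.B ≤ P.K₂ * (P.γ * P.d / 4) * exp (P.c * P.M) := by
  have hB : 0 < P.B := by linarith [P.two_le_B]
  have hE := P.n_le_exp_c_mul_half_M
  have hβR : P.β * P.R ≤ P.γ * P.d / 4 := by linarith [P.β_mul_R_le, P.L_le_γ_mul_d]
  calc 4 * P.B ≤ 28 * P.B / P.n * exp (P.c * (P.M / 2)) := by
        rw [div_mul_eq_mul_div, le_div_iff₀ P.n_pos]
        nlinarith [P.one_le_n]
  _ = P.K₂ * (P.β * P.R) * exp (P.c * (P.M / 2)) * exp (P.c * (P.M / 2)) := by rw [K₂_mul]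
  _ ≤ P.K₂ * (P.γ * P.d / 4) * exp (P.c * P.M) := by
        have hE₀ := (exp_pos (P.c * (P.M / 2))).le
        rw [exp_c_mul_M, ← mul_assoc (P.K₂ * _)]
        exact mul_le_mul_of_nonneg_right
          (mul_le_mul_of_nonneg_right (mul_le_mul_of_nonneg_left hβR P.K₂_pos.le) hE₀) hE₀

lemma n_mul_drift_le : P.n * (P.load * P.β - P.q * P.γ) ≤ -(P.L ^ 2 / 32) := by
  have hLR : 0 ≤ P.L / P.R := div_nonneg P.L_pos.le P.R_pos.le
  have h_eq : P.load * P.β - P.q * P.γ = P.load * (P.β * P.γ) - P.γ * (P.L / P.R) := by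
    rw [q]; linear_combination P.load * P.β_sub_γ
  have h_βγ : P.load * (P.β * P.γ) ≤ 2 * P.θ * P.θ :=
    (mul_le_of_le_one_left (mul_pos P.β_pos P.γ_pos).le P.load_le_one).trans
      (mul_le_mul P.β_le P.γ_le_θ P.γ_pos.le (by linarith [P.θ_pos]))
  have h_γ : P.θ / 2 * (P.L / P.R) ≤ P.γ * (P.L / P.R) :=
    mul_le_mul_of_nonneg_right P.half_θ_le_γ hLR
  have e₁ : P.n * (2 * P.θ * P.θ) = P.L ^ 2 / 32 := by
    rw [θ, ← P.R_mul_R]; field_simp [P.R_pos.ne']; ring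
  have e₂ : P.n * (P.θ / 2 * (P.L / P.R)) = P.L ^ 2 / 16 := by
    rw [θ, ← P.R_mul_R]; field_simp [P.R_pos.ne']; ring
  rw [h_eq]
  nlinarith [P.n_pos]

lemma upDownDrift_ψ (up down x : ℝ) :
    upDownDrift P.ψ up down (1 / P.n) x = P.K₂ * exp (P.c * x) * (up * P.β - down * P.γ) := by
  rw [show P.ψ = fun y => P.K₂ * exp (P.c * y) from rfl, upDownDrift_const_mul_exp, c_mul_inv_n]
  rfl

lemma upDownDrift_φ_le {up down : ℝ} (x : ℝ) (hup : 0 ≤ up) (hup' : up ≤ P.n) (hdown : 0 ≤ down)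
    (hdown' : down ≤ P.n) :
    upDownDrift P.φ up down (1 / P.n) x ≤
      2 / P.n * max (x - P.Q) 0 * (up - down) + 2 / P.n +
        P.K₁ * exp (P.c * x) * (up * P.β - down * P.γ) := by
  have hn := P.n_pos
  have hsq := upDownDrift_sq_posPart_le (Q := P.Q) (1 / P.n) x hup hdown
  have hh : (up + down) * (1 / P.n) ^ 2 ≤ 2 / P.n := by
    rw [div_pow, one_pow, mul_one_div, div_le_div_iff₀ (by positivity) hn]
    nlinarith
  rw [show P.φ = fun y => max (y - P.Q) 0 ^ 2 + P.K₁ * exp (P.c * y) from rfl, upDownDrift_add,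
    upDownDrift_const_mul_exp, c_mul_inv_n]
  rw [mul_one_div] at hsq
  simp only [β, γ]
  linarith

lemma tail_drift_le_of_le_half_M {U V x : ℝ} (hU : U ≤ P.R) (hV : 0 ≤ V) (hx : x ≤ P.M / 2) :
    P.K₂ * exp (P.c * x) * (U * P.β - V * P.γ) ≤ 28 * P.B / P.n := by
  have h_rate : U * P.β - V * P.γ ≤ P.β * P.R := by
    nlinarith [P.β_pos, P.γ_pos, mul_le_mul_of_nonneg_right hU P.β_pos.le]
  have h_exp : exp (P.c * x) ≤ exp (P.c * (P.M / 2)) :=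
    exp_le_exp.mpr (mul_le_mul_of_nonneg_left hx P.c_pos.le)
  rw [← K₂_mul]
  have := P.K₂_pos; have := P.β_pos; have := P.R_pos
  calc P.K₂ * exp (P.c * x) * (U * P.β - V * P.γ) ≤ P.K₂ * exp (P.c * x) * (P.β * P.R) := by
        gcongr
  _ ≤ P.K₂ * exp (P.c * (P.M / 2)) * (P.β * P.R) := by gcongr
  _ = _ := by ring

lemma tail_drift_le_of_d_le {U V x : ℝ} (hU : U ≤ P.R) (hV : P.d ≤ V) :
    P.K₂ * exp (P.c * x) * (U * P.β - V * P.γ) ≤ -(P.K₂ * (P.γ * P.d / 2) * exp (P.c * x)) := by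
  have h_rate : U * P.β - V * P.γ ≤ -(P.γ * P.d / 2) := by
    nlinarith [P.β_pos, P.γ_pos, mul_le_mul_of_nonneg_right hU P.β_pos.le,
      mul_le_mul_of_nonneg_left hV P.γ_pos.le, P.β_mul_R_le, P.L_le_γ_mul_d, P.L_pos]
  have := mul_le_mul_of_nonneg_left h_rate (mul_pos P.K₂_pos (exp_pos (P.c * x))).le
  linarith

lemma d_le_of_half_M_lt {s₂ x : ℝ} (hx : P.M / 2 < x) (hxs : x ≤ (P.B - 1) * s₂) :
    P.d ≤ P.n * s₂ := by
  rw [d, div_le_iff₀ (by linarith [P.B_sub_one_pos])]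
  nlinarith [P.n_pos]

lemma tail_drift_le_of_le_R {U s₂ x : ℝ} (hU : U ≤ P.R) (hs₂ : 0 ≤ s₂) (hxs : x ≤ (P.B - 1) * s₂) :
    P.K₂ * exp (P.c * x) * (U * P.β - P.n * s₂ * P.γ) ≤ 28 * P.B / P.n := by
  rcases le_or_gt x (P.M / 2) with hx | hx
  · exact P.tail_drift_le_of_le_half_M hU (mul_nonneg P.n_pos.le hs₂) hx
  · have := P.tail_drift_le_of_d_le (x := x) hU (P.d_le_of_half_M_lt hx hxs)
    have := mul_pos (mul_pos P.K₂_pos (by nlinarith [P.γ_pos, P.d_pos] : 0 < P.γ * P.d / 2))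
      (exp_pos (P.c * x))
    have : 0 < 28 * P.B / P.n := div_pos (by linarith [P.two_le_B]) P.n_pos
    linarith

lemma four_mul_posPart_le {x : ℝ} (hx : x ≤ P.B) :
    4 * max (x - P.M) 0 ≤ P.K₂ * (P.γ * P.d / 4) * exp (P.c * x) := by
  have h₀ : 0 ≤ P.K₂ * (P.γ * P.d / 4) * exp (P.c * x) := by
    have := P.K₂_pos; have := P.γ_pos; have := P.d_pos; positivity
  rcases le_total x P.M with hxM | hxM
  · rw [max_eq_right (by linarith)]
    linarith
  · calc 4 * max (x - P.M) 0 ≤ 4 * P.B := by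
          have := P.M_pos
          gcongr
          exact max_le (by linarith) (by linarith [P.two_le_B])
    _ ≤ P.K₂ * (P.γ * P.d / 4) * exp (P.c * P.M) := P.four_mul_B_le
    _ ≤ _ := by
          have := P.K₂_pos; have := P.γ_pos; have := P.d_pos
          gcongr
          exact P.c_pos.le

/-- The constraints, seen from a state of the chain, on the rates `U₁`, `U₂` of the arrivals
that increase `∑ sᵢ` and `∑_{i ≥ 2} sᵢ`, on the occupancies `s₁ ≥ s₂` and on `x = ∑_{i ≥ 2} sᵢ`. -/
structure Admissible (U₁ U₂ s₁ s₂ x : ℝ) : Prop where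
  U₁_nonneg : 0 ≤ U₁
  U₁_le : U₁ ≤ P.load * P.n
  U₂_le : U₂ ≤ P.load * P.n
  U₂_le_R : s₁ ≤ P.Q → U₂ ≤ P.R
  s₂_nonneg : 0 ≤ s₂
  s₂_le_s₁ : s₂ ≤ s₁
  s₁_le_one : s₁ ≤ 1
  x_le : x ≤ (P.B - 1) * s₂

/-- The drift of the Lyapunov function `φ (∑ sᵢ) + ψ (∑_{i ≥ 2} sᵢ)`, with `∑ sᵢ = s₁ + x`. -/
def drift (U₁ U₂ s₁ s₂ x : ℝ) : ℝ :=
  upDownDrift P.φ U₁ (P.n * s₁) (1 / P.n) (s₁ + x) + upDownDrift P.ψ U₂ (P.n * s₂) (1 / P.n) x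

variable {P} {U₁ U₂ s₁ s₂ x : ℝ}

lemma load_mul_n_le_n : P.load * P.n ≤ P.n := mul_le_of_le_one_left P.n_pos.le P.load_le_one

lemma Admissible.drift_le_terms (h : P.Admissible U₁ U₂ s₁ s₂ x) :
    P.drift U₁ U₂ s₁ s₂ x ≤
      2 / P.n + 2 / P.n * max (s₁ + x - P.Q) 0 * (U₁ - P.n * s₁) +
        P.K₁ * exp (P.c * (s₁ + x)) * (U₁ * P.β - P.n * s₁ * P.γ) +
          P.K₂ * exp (P.c * x) * (U₂ * P.β - P.n * s₂ * P.γ) := by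
  have hs₁ := h.s₂_nonneg.trans h.s₂_le_s₁
  have := P.upDownDrift_φ_le (s₁ + x) h.U₁_nonneg (h.U₁_le.trans P.load_mul_n_le_n)
    (mul_nonneg P.n_pos.le hs₁) (mul_le_of_le_one_right P.n_pos.le h.s₁_le_one)
  rw [drift, upDownDrift_ψ]
  linarith

lemma two_div_n_le : 2 / P.n ≤ 2 * P.B / P.n :=
  div_le_div_of_nonneg_right (by linarith [P.two_le_B]) P.n_pos.le

lemma Admissible.drift_le_of_q_le (h : P.Admissible U₁ U₂ s₁ s₂ x) (hq : P.q ≤ s₁) :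
    P.drift U₁ U₂ s₁ s₂ x ≤
      -(2 * P.R * P.L / P.n) * max (s₁ + x - P.Q) 0 + 58 * P.B / P.n := by
  have hn := P.n_pos
  have hnq : P.n * P.q ≤ P.n * s₁ := mul_le_mul_of_nonneg_left hq hn.le
  have h_quad : 2 / P.n * max (s₁ + x - P.Q) 0 * (U₁ - P.n * s₁) ≤
      -(2 * P.R * P.L / P.n) * max (s₁ + x - P.Q) 0 := by
    have h_nq : P.n * P.q = P.load * P.n + P.R * P.L := by
      rw [q, ← P.R_mul_R]; field_simp [P.R_pos.ne']
    have := mul_le_mul_of_nonneg_left (show U₁ - P.n * s₁ ≤ -(P.R * P.L) by linarith [h.U₁_le])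
      (by positivity : 0 ≤ 2 / P.n * max (s₁ + x - P.Q) 0)
    linarith [show 2 / P.n * max (s₁ + x - P.Q) 0 * -(P.R * P.L) =
      -(2 * P.R * P.L / P.n) * max (s₁ + x - P.Q) 0 by ring]
  have h_total : P.K₁ * exp (P.c * (s₁ + x)) * (U₁ * P.β - P.n * s₁ * P.γ) ≤
      -(P.K₁ * (P.L ^ 2 / 32) * exp (P.c * (s₁ + x))) := by
    have : U₁ * P.β - P.n * s₁ * P.γ ≤ -(P.L ^ 2 / 32) := by
      nlinarith [P.n_mul_drift_le, mul_le_mul_of_nonneg_right h.U₁_le P.β_pos.le,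
        mul_le_mul_of_nonneg_right hnq P.γ_pos.le]
    nlinarith [mul_le_mul_of_nonneg_left this (mul_pos P.K₁_pos (exp_pos (P.c * (s₁ + x)))).le]
  have h_total_nonneg : 0 ≤ P.K₁ * (P.L ^ 2 / 32) * exp (P.c * (s₁ + x)) := by
    have := P.K₁_pos; positivity
  have := h.drift_le_terms
  have := P.two_div_n_le
  rcases le_or_gt s₁ P.Q with hQ | hQ
  · have := P.tail_drift_le_of_le_R (h.U₂_le_R hQ) h.s₂_nonneg h.x_le
    have : 0 ≤ 28 * P.B / P.n := div_nonneg (by linarith [P.two_le_B]) hn.le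
    linarith [show 58 * P.B / P.n = 2 * P.B / P.n + 28 * P.B / P.n + 28 * P.B / P.n by ring]
  · -- Above `Q` the weight `K₁` makes the drift of `exp (c ∑ sᵢ)` absorb that of `exp (c x)`.
    have h_tail : P.K₂ * exp (P.c * x) * (U₂ * P.β - P.n * s₂ * P.γ) ≤
        P.K₂ * P.β * P.n * exp (P.c * x) := by
      have : U₂ * P.β - P.n * s₂ * P.γ ≤ P.n * P.β := by
        nlinarith [mul_le_mul_of_nonneg_right (h.U₂_le.trans P.load_mul_n_le_n) P.β_pos.le,
          mul_nonneg (mul_nonneg hn.le h.s₂_nonneg) P.γ_pos.le]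
      nlinarith [mul_le_mul_of_nonneg_left this (mul_pos P.K₂_pos (exp_pos (P.c * x))).le]
    have h_absorb : 2 * (P.K₂ * P.β * P.n * exp (P.c * x)) ≤
        P.K₁ * (P.L ^ 2 / 32) * exp (P.c * (s₁ + x)) := by
      have : exp (P.c * P.Q) * exp (P.c * x) ≤ exp (P.c * (s₁ + x)) := by
        rw [← exp_add, ← mul_add]
        exact exp_le_exp.mpr (mul_le_mul_of_nonneg_left (by linarith) P.c_pos.le)
      calc 2 * (P.K₂ * P.β * P.n * exp (P.c * x))
          = P.K₁ * (P.L ^ 2 / 32) * (exp (P.c * P.Q) * exp (P.c * x)) := by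
            rw [← mul_assoc _ (exp _), K₁_mul]; ring
      _ ≤ _ := mul_le_mul_of_nonneg_left this (by have := P.K₁_pos; positivity)
    have : 0 ≤ P.K₂ * P.β * P.n * exp (P.c * x) := by
      have := P.K₂_pos; have := P.β_pos; positivity
    have : 0 ≤ 56 * P.B / P.n := div_nonneg (by linarith [P.two_le_B]) hn.le
    linarith [show 58 * P.B / P.n = 2 * P.B / P.n + 56 * P.B / P.n by ring]

lemma Admissible.drift_le_of_lt_q (h : P.Admissible U₁ U₂ s₁ s₂ x) (hq : s₁ < P.q) :
    P.drift U₁ U₂ s₁ s₂ x ≤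
      -(2 * P.R * P.L / P.n) * max (s₁ + x - P.Q) 0 + 58 * P.B / P.n := by
  have hn := P.n_pos
  have hs₁ := h.s₂_nonneg.trans h.s₂_le_s₁
  have hU₁ : U₁ ≤ P.n := h.U₁_le.trans P.load_mul_n_le_n
  have hU₂ : U₂ ≤ P.R := h.U₂_le_R (by rw [Q]; linarith [P.M_pos])
  have hK₂ := P.K₂_pos
  -- Below `q`, an excess of `∑ sᵢ` over `Q` forces an excess of the tail `x` over `M`.
  have h_quad : 2 / P.n * max (s₁ + x - P.Q) 0 * (U₁ - P.n * s₁) ≤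
      -(2 * P.R * P.L / P.n) * max (s₁ + x - P.Q) 0 + 4 * max (x - P.M) 0 := by
    have hyz : max (s₁ + x - P.Q) 0 ≤ max (x - P.M) 0 :=
      max_le_max (by rw [Q]; linarith) le_rfl
    have hRL : P.R * P.L ≤ P.n := P.R_mul_R ▸ mul_le_mul_of_nonneg_left P.L_le_R P.R_pos.le
    have := mul_le_mul_of_nonneg_left
      (show U₁ - P.n * s₁ ≤ 2 * P.n - P.R * P.L by nlinarith)
      (by positivity : 0 ≤ 2 / P.n * max (s₁ + x - P.Q) 0)
    have e : 2 / P.n * max (s₁ + x - P.Q) 0 * (2 * P.n - P.R * P.L) =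
        4 * max (s₁ + x - P.Q) 0 - 2 * P.R * P.L / P.n * max (s₁ + x - P.Q) 0 := by
      field_simp; ring
    nlinarith
  have h_total : P.K₁ * exp (P.c * (s₁ + x)) * (U₁ * P.β - P.n * s₁ * P.γ) ≤
      4 * P.K₂ * exp (P.c * x) := by
    have h_rate : U₁ * P.β - P.n * s₁ * P.γ ≤ P.R * P.L / 4 := by
      have : P.θ * P.n = P.R * P.L / 8 := P.c_eq
      nlinarith [mul_le_mul_of_nonneg_right hU₁ P.β_pos.le, P.β_le,
        mul_nonneg (mul_nonneg hn.le hs₁) P.γ_pos.le]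
    have h_exp : exp (P.c * (s₁ + x)) ≤ exp (P.c * P.q) * exp (P.c * x) := by
      rw [← exp_add, ← mul_add]
      exact exp_le_exp.mpr (mul_le_mul_of_nonneg_left (by linarith) P.c_pos.le)
    have := P.K₁_pos; have := P.R_pos; have := P.L_pos
    calc P.K₁ * exp (P.c * (s₁ + x)) * (U₁ * P.β - P.n * s₁ * P.γ)
        ≤ P.K₁ * exp (P.c * (s₁ + x)) * (P.R * P.L / 4) := by gcongr
    _ ≤ P.K₁ * (exp (P.c * P.q) * exp (P.c * x)) * (P.R * P.L / 4) := by gcongr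
    _ = P.K₁ * (P.R * P.L / 4) * exp (P.c * P.q) * exp (P.c * x) := by ring
    _ ≤ _ := mul_le_mul_of_nonneg_right P.K₁_mul_exp_c_mul_q_le (exp_pos _).le
  have := h.drift_le_terms
  have := P.two_div_n_le
  rcases le_or_gt x (P.M / 2) with hx | hx
  · have hz : max (x - P.M) 0 = 0 := max_eq_right (by linarith [P.M_pos])
    have h_tail := P.tail_drift_le_of_le_half_M hU₂ (mul_nonneg hn.le h.s₂_nonneg) hx
    have : 4 * P.K₂ * exp (P.c * x) ≤ 28 * P.B / P.n := by
      have := P.four_le_β_mul_R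
      rw [← K₂_mul]
      calc 4 * P.K₂ * exp (P.c * x) ≤ P.K₂ * (P.β * P.R) * exp (P.c * x) :=
        mul_le_mul_of_nonneg_right (by nlinarith) (exp_pos _).le
      _ ≤ _ := by gcongr; exact P.c_pos.le
    linarith [show 58 * P.B / P.n = 2 * P.B / P.n + 28 * P.B / P.n + 28 * P.B / P.n by ring]
  · have := P.tail_drift_le_of_d_le (x := x) hU₂ (P.d_le_of_half_M_lt hx h.x_le)
    have := P.four_mul_posPart_le (x := x)
      (by nlinarith [h.x_le, h.s₂_le_s₁, h.s₁_le_one, h.s₂_nonneg, P.B_sub_one_pos])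
    have : 4 * P.K₂ * exp (P.c * x) ≤ P.K₂ * (P.γ * P.d / 4) * exp (P.c * x) := by
      have := mul_pos hK₂ (exp_pos (P.c * x))
      nlinarith [P.L_le_γ_mul_d, P.hundred_le_L]
    have : 0 ≤ 56 * P.B / P.n := div_nonneg (by linarith [P.two_le_B]) hn.le
    linarith [show 58 * P.B / P.n = 2 * P.B / P.n + 56 * P.B / P.n by ring]

lemma Admissible.drift_le (h : P.Admissible U₁ U₂ s₁ s₂ x) :
    P.drift U₁ U₂ s₁ s₂ x ≤
      -(2 * P.R * P.L / P.n) * max (s₁ + x - P.Q) 0 + 58 * P.B / P.n := by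
  rcases le_or_gt P.q s₁ with hq | hq
  · exact h.drift_le_of_q_le hq
  · exact h.drift_le_of_lt_q hq

section System

variable {α : ℝ} {N b : ℕ} (hα : 0 ≤ α) (hL : 100 ≤ log N) (hLR : log N ≤ √N) (hb : 2 ≤ b)
  (hbL : 100 * (b : ℝ) ^ 2 ≤ log N)

def ofSystem : Regime where
  n := N
  R := √N
  L := log N
  B := b
  load := lam α N
  R_mul_R := mul_self_sqrt (Nat.cast_nonneg N)
  exp_L := exp_log (by exact_mod_cast _root_.one_le_of_hundred_le_log hL)
  hundred_le_L := hL
  L_le_R := hLR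
  two_le_B := by exact_mod_cast hb
  hundred_mul_B_sq_le_L := hbL
  load_nonneg := by
    have := rpow_le_one_of_one_le_of_nonpos (x := N)
      (by exact_mod_cast _root_.one_le_of_hundred_le_log hL) (neg_nonpos.mpr hα)
    rw [_root_.lam]; linarith
  load_le_one := by
    rw [_root_.lam]; linarith [rpow_nonneg (Nat.cast_nonneg N) (-α)]

lemma Q_ofSystem : (ofSystem hα hL hLR hb hbL).Q = thr α N b := by
  rw [Q, q, M, thr, kcoef]
  dsimp only [ofSystem]
  have hB : (b : ℝ) - 1 ≠ 0 := by
    have : (2 : ℝ) ≤ b := by exact_mod_cast hb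
    linarith
  have hR : √(N : ℝ) ≠ 0 := (ofSystem hα hL hLR hb hbL).R_pos.ne'
  field_simp
  ring

lemma gen_ofSystem_le (alg : Algo N b) (halg : GoodAlgo N b α alg) (s : State N b) :
    let P := ofSystem hα hL hLR hb hbL
    gen N b α alg (fun w => P.φ (∑ i ∈ Icc 1 b, w i) + P.ψ (∑ i ∈ Icc 2 b, w i)) s.val ≤
      -(2 * P.R * P.L / P.n) * max (∑ i ∈ Icc 1 b, s.val i - thr α N b) 0 + 58 * P.B / P.n := by
  intro P
  have hA_b : 0 ≤ alg.A b s.val := alg.a_nonneg s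
  have hA_b₁ : alg.A b s.val ≤ alg.A 1 s.val := alg.A_anti s (by omega) le_rfl
  have hA₁ : alg.A 1 s.val ≤ 1 := alg.a_zero s ▸ alg.A_anti s (by omega) (by omega)
  have hlamN : 0 ≤ lam α N * N := mul_nonneg P.load_nonneg (Nat.cast_nonneg N)
  have h_tail : ∑ i ∈ Icc 2 b, s.val i ≤ ((b : ℝ) - 1) * s.val 2 := by
    have := sum_le_card_nsmul (Icc 2 b) s.val (s.val 2) fun i hi => s.antitone (mem_Icc.mp hi).1
    rwa [Nat.card_Icc, nsmul_eq_mul, Nat.cast_sub (by omega), Nat.cast_add, Nat.cast_one,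
      Nat.cast_two, show (b : ℝ) + 1 - 2 = b - 1 by ring] at this
  have h : P.Admissible (lam α N * N * (1 - alg.A b s.val))
      (lam α N * N * (alg.A 1 s.val - alg.A b s.val)) (s.val 1) (s.val 2)
      (∑ i ∈ Icc 2 b, s.val i) :=
    { U₁_nonneg := mul_nonneg hlamN (by linarith)
      U₁_le := mul_le_of_le_one_right hlamN (by linarith)
      U₂_le := mul_le_of_le_one_right hlamN (by linarith)
      U₂_le_R := fun hQ => by
        have hA := halg s (Q_ofSystem hα hL hLR hb hbL ▸ hQ)
        calc lam α N * N * (alg.A 1 s.val - alg.A b s.val) ≤ N * (1 / √N) :=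
              mul_le_mul (mul_le_of_le_one_left (Nat.cast_nonneg N) P.load_le_one) (by linarith)
                (by linarith) (Nat.cast_nonneg N)
        _ = P.R := (mul_one_div _ _).trans div_sqrt
      s₂_nonneg := s.nonneg 2
      s₂_le_s₁ := s.antitone (by norm_num)
      s₁_le_one := s.le_one 1
      x_le := h_tail }
  rw [gen_add, gen_comp_sum_Icc alg _ _ le_rfl (by omega),
    gen_comp_sum_Icc alg _ _ (by norm_num) hb, show 1 - 1 = 0 from rfl, show 2 - 1 = 1 from rfl,
    alg.a_zero s, s.prop.2.1 (b + 1) (by omega),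
    sub_zero, sub_zero, ← add_sum_Ioc_eq_sum_Icc (by omega), ← Q_ofSystem hα hL hLR hb hbL]
  exact h.drift_le

end System

end Regime

lemma eventually_regime {b : ℕ → ℕ}
    (hbo : Tendsto (fun N : ℕ => (b N : ℝ) / √(log N)) atTop (nhds 0)) :
    ∀ᶠ N : ℕ in atTop, 100 ≤ log N ∧ log N ≤ √N ∧ 100 * (b N : ℝ) ^ 2 ≤ log N := by
  have h_log : ∀ᶠ N : ℕ in atTop, 100 ≤ log N :=
    (tendsto_log_atTop.comp tendsto_natCast_atTop_atTop).eventually_ge_atTop 100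
  have h_sqrt : ∀ᶠ x : ℝ in atTop, log x ≤ √x := by
    filter_upwards [(isLittleO_log_rpow_atTop (by norm_num : (0 : ℝ) < 1 / 2)).bound one_pos,
      eventually_ge_atTop 0] with x h hx
    rw [sqrt_eq_rpow]
    simpa [norm_eq_abs, abs_of_nonneg (rpow_nonneg hx _)] using (le_abs_self _).trans h
  filter_upwards [h_log, tendsto_natCast_atTop_atTop.eventually h_sqrt,
    hbo.eventually_lt_const (by norm_num : (0 : ℝ) < 1 / 10)] with N hL hLR hb
  refine ⟨hL, hLR, ?_⟩
  have hL₀ : 0 < √(log N) := sqrt_pos.mpr (by linarith)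
  rw [div_lt_iff₀ hL₀] at hb
  nlinarith [mul_self_sqrt (by linarith : (0 : ℝ) ≤ log N), Nat.cast_nonneg (α := ℝ) (b N)]

theorem stmt0_general (α : ℝ) (hα₁ : 0 < α) (b : ℕ → ℕ)
    (hb : ∀ N, 2 ≤ b N)
    (hbo : Tendsto (fun N : ℕ => (b N : ℝ) / Real.sqrt (Real.log N)) atTop (nhds 0)) :
    ∃ N₀ : ℕ, ∀ N : ℕ, N₀ ≤ N → ∀ alg : Algo N (b N), GoodAlgo N (b N) α alg →
      ∀ μ : State N (b N) → ℝ, IsStationaryLB N (b N) α alg μ →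
        (∑' s : State N (b N),
            μ s * max ((∑ i ∈ Finset.Icc 1 (b N), s.val i) - thr α N (b N)) 0)
          ≤ 29 * (b N : ℝ) / (Real.sqrt N * Real.log N) := by
  obtain ⟨N₀, hN₀⟩ := eventually_atTop.mp (eventually_regime hbo)
  refine ⟨N₀, fun N hN alg halg μ hμ => ?_⟩
  obtain ⟨hL, hLR, hbL⟩ := hN₀ N hN
  let P := Regime.ofSystem hα₁.le hL hLR (hb N) hbL
  have : Finite (State N (b N)) := State.finite (one_le_of_hundred_le_log hL)
  have h := tsum_mul_le_of_drift_le (fun s => (hμ.1 s).1) hμ.2.1 (hμ.2.2 _)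
    (by have := P.R_pos; have := P.L_pos; have := P.n_pos; positivity)
    (Regime.gen_ofSystem_le hα₁.le hL hLR (hb N) hbL alg halg)
  convert h using 1
  have hn : (0 : ℝ) < N := P.n_pos
  have hR : 0 < √(N : ℝ) := P.R_pos
  have hL₀ : 0 < log (N : ℝ) := P.L_pos
  change _ = 58 * (b N : ℝ) / N / (2 * √N * log N / N)
  field_simp
  ring

theorem stmt0 (α : ℝ) (hα₁ : 0 < α) (hα₂ : α < 1 / 2) (b : ℕ → ℕ)
    (hb : ∀ N, 2 ≤ b N)
    (hbo : Tendsto (fun N : ℕ => (b N : ℝ) / Real.sqrt (Real.log N)) atTop (nhds 0)) :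
    ∃ N₀ : ℕ, ∀ N : ℕ, N₀ ≤ N → ∀ alg : Algo N (b N), GoodAlgo N (b N) α alg →
      ∀ μ : State N (b N) → ℝ, IsStationaryLB N (b N) α alg μ →
        (∑' s : State N (b N),
            μ s * max ((∑ i ∈ Finset.Icc 1 (b N), s.val i) - thr α N (b N)) 0)
          ≤ 29 * (b N : ℝ) / (Real.sqrt N * Real.log N) :=
  stmt0_general α hα₁ b hb hbo
end
end

section
/- For every integer N ≥ 2, every integer b ≥ 2, every real α ∈ (0, 1/2), every load balancing algorithm satisfying A₁(s) ≤ 1/√N for all s ∈ 𝒮 with s₁ ≤ λ + k·log N/√N, and every state s ∈ 𝒮 with V(s) ≥ log N/√N, the Lyapunov drift satisfies GV(s) ≤ −(1/(2(b−1)))·log N/√N + 1/√N. -/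
open Filter

noncomputable section

/-- A stationary distribution of the chain. -/
def IsStationaryChain (N b : ℕ) (α : ℝ) (alg : Algo N b) (μ : State N b → ℝ) : Prop :=
  (∀ s, 0 ≤ μ s ∧ μ s ≤ 1) ∧ (∑' s : State N b, μ s) = 1 ∧
    ∀ g : (ℕ → ℝ) → ℝ, (∑' s : State N b, μ s * gen N b α alg g s.val) = 0

/-- The Lyapunov function `V(s) = min { Σ_{i=2}^b s_i, λ + k log N/√N - s₁ }`. -/
def lyap (N b : ℕ) (α : ℝ) (s : ℕ → ℝ) : ℝ :=
  min (∑ i ∈ Finset.Icc 2 b, s i) (thr α N b - s 1)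


/-!
`V` is the minimum of the linear functions `f s = ∑_{i=2}^b s_i` and `g s = λ + k log N/√N - s₁`.
All jump rates of the chain are nonnegative, so `GV(s) ≤ Gf(s)` when `V(s) = f(s)` and
`GV(s) ≤ Gg(s)` when `V(s) = g(s)`. The drift of a linear function telescopes:
`Gf = λ (A₁ - A_b) - s₂` and `Gg = -λ (1 - A₁) + s₁ - s₂`. From `V(s) ≥ L := log N/√N` we get
`(b - 1) s₂ ≥ f(s) ≥ L` and `s₁ ≤ λ + (k - 1) L`, and `A₁ ≤ 1/√N` by the assumption on the
algorithm; with `k - 1 = 1/(2(b-1))` both drifts are at most `1/√N - L/(2(b-1))`.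
-/

open Finset

section Drift

variable {N b : ℕ} {α : ℝ}

lemma lam_nonneg (hN : 1 ≤ N) (hα : 0 ≤ α) : 0 ≤ lam α N := by
  have : (N : ℝ) ^ (-α) ≤ 1 :=
    Real.rpow_le_one_of_one_le_of_nonpos (by exact_mod_cast hN) (neg_nonpos.2 hα)
  unfold lam
  linarith

lemma lam_le_one : lam α N ≤ 1 := by
  have := Real.rpow_nonneg (Nat.cast_nonneg N) (-α)
  unfold lam
  linarith

lemma IsState.antitone {s : ℕ → ℝ} (hs : IsState N b s) : Antitone s := by
  obtain ⟨-, hzero, hsucc, -⟩ := hs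
  refine antitone_nat_of_succ_le fun i => ?_
  rcases le_or_gt i b with hi | hi
  · exact hsucc i hi
  · rw [hzero i hi, hzero (i + 1) (by omega)]

lemma Algo.A_le_A_one (alg : Algo N b) (s : State N b) {j : ℕ} (hj : 1 ≤ j) (hjb : j ≤ b) :
    alg.A j s.val ≤ alg.A 1 s.val := by
  induction j, hj using Nat.le_induction with
  | base => exact le_rfl
  | succ j hj ih => exact (alg.a_mono s (j + 1) (by omega) hjb).trans (ih (by omega))

lemma sum_Icc_one_eq_add_sum_Icc_two {M : Type*} [AddCommMonoid M] (f : ℕ → M) (hb : 1 ≤ b) :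
    ∑ i ∈ Icc 1 b, f i = f 1 + ∑ i ∈ Icc 2 b, f i := by
  rw [← add_sum_Ioc_eq_sum_Icc hb, ← Icc_add_one_left_eq_Ioc]
  rfl

lemma sum_Icc_sub_succ (u : ℕ → ℝ) {m n : ℕ} (h : m ≤ n) :
    ∑ i ∈ Icc m n, (u i - u (i + 1)) = u m - u (n + 1) := by
  have := sum_Icc_sub h (-u)
  simp only [Pi.neg_apply, neg_sub_neg] at this
  exact this

lemma gen_le_gen (alg : Algo N b) (s : State N b) (hlam : 0 ≤ lam α N)
    {g₁ g₂ : (ℕ → ℝ) → ℝ}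
    (hup : ∀ i ∈ Icc 1 b, g₁ (s.val + evec N i) - g₁ s.val ≤ g₂ (s.val + evec N i) - g₂ s.val)
    (hdown : ∀ i ∈ Icc 1 b,
      g₁ (s.val - evec N i) - g₁ s.val ≤ g₂ (s.val - evec N i) - g₂ s.val) :
    gen N b α alg g₁ s.val ≤ gen N b α alg g₂ s.val := by
  refine sum_le_sum fun i hi => ?_
  obtain ⟨hi1, hib⟩ := mem_Icc.1 hi
  have harrival : 0 ≤ lam α N * N * (alg.A (i - 1) s.val - alg.A i s.val) :=
    mul_nonneg (mul_nonneg hlam N.cast_nonneg) (sub_nonneg.2 (alg.a_mono s i hi1 hib))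
  have hdeparture : 0 ≤ (N : ℝ) * (s.val i - s.val (i + 1)) :=
    mul_nonneg N.cast_nonneg (sub_nonneg.2 (s.2.antitone i.le_succ))
  exact add_le_add (mul_le_mul_of_nonneg_left (hup i hi) harrival)
    (mul_le_mul_of_nonneg_left (hdown i hi) hdeparture)

lemma gen_min_le_gen_left (alg : Algo N b) (s : State N b) (hlam : 0 ≤ lam α N)
    {φ ψ : (ℕ → ℝ) → ℝ} (h : φ s.val ≤ ψ s.val) :
    gen N b α alg (fun x => min (φ x) (ψ x)) s.val ≤ gen N b α alg φ s.val := by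
  have key (y : ℕ → ℝ) : min (φ y) (ψ y) - min (φ s.val) (ψ s.val) ≤ φ y - φ s.val := by
    rw [min_eq_left h]
    linarith [min_le_left (φ y) (ψ y)]
  exact gen_le_gen alg s hlam (fun _ _ => key _) (fun _ _ => key _)

lemma gen_min_le_gen_right (alg : Algo N b) (s : State N b) (hlam : 0 ≤ lam α N)
    {φ ψ : (ℕ → ℝ) → ℝ} (h : ψ s.val ≤ φ s.val) :
    gen N b α alg (fun x => min (φ x) (ψ x)) s.val ≤ gen N b α alg ψ s.val := by
  simp_rw [min_comm (φ _)]
  exact gen_min_le_gen_left alg s hlam h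

lemma gen_sum_Icc_two (alg : Algo N b) (s : ℕ → ℝ) (hN : N ≠ 0) (hb : 2 ≤ b)
    (hs : s (b + 1) = 0) :
    gen N b α alg (fun x => ∑ j ∈ Icc 2 b, x j) s = lam α N * (alg.A 1 s - alg.A b s) - s 2 := by
  have hN' : (N : ℝ) ≠ 0 := by exact_mod_cast hN
  have hterm : ∀ i ∈ Icc 2 b,
      lam α N * N * (alg.A (i - 1) s - alg.A i s) *
          (∑ j ∈ Icc 2 b, (s + evec N i) j - ∑ j ∈ Icc 2 b, s j)
        + N * (s i - s (i + 1)) * (∑ j ∈ Icc 2 b, (s - evec N i) j - ∑ j ∈ Icc 2 b, s j)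
      = lam α N * (alg.A (i - 1) s - alg.A i s) - (s i - s (i + 1)) := by
    intro i hi
    simp only [Pi.add_apply, Pi.sub_apply, evec, one_div, sum_add_distrib, sum_sub_distrib,
      sum_ite_eq', hi, ↓reduceIte, add_sub_cancel_left, sub_sub_cancel_left, mul_neg]
    field_simp
    ring
  have hA : ∑ i ∈ Icc 2 b, (alg.A (i - 1) s - alg.A i s) = alg.A 1 s - alg.A b s := by
    simpa using sum_Icc_sub_succ (fun i => alg.A (i - 1) s) hb
  rw [gen, sum_Icc_one_eq_add_sum_Icc_two _ (by omega), sum_congr rfl hterm, sum_sub_distrib,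
    ← mul_sum, hA, sum_Icc_sub_succ s hb, hs]
  simp [evec, sum_add_distrib, sum_sub_distrib]

lemma gen_const_sub_apply_one (alg : Algo N b) (s : ℕ → ℝ) (c : ℝ) (hN : N ≠ 0) (hb : 1 ≤ b) :
    gen N b α alg (fun x => c - x 1) s
      = -(lam α N * (alg.A 0 s - alg.A 1 s)) + (s 1 - s 2) := by
  have hN' : (N : ℝ) ≠ 0 := by exact_mod_cast hN
  rw [gen, sum_Icc_one_eq_add_sum_Icc_two _ hb, sum_eq_zero]
  · simp only [tsub_self, Pi.add_apply, Pi.sub_apply, evec, ↓reduceIte, one_div,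
      sub_sub_sub_cancel_left, sub_add_cancel_left, mul_neg, Nat.reduceAdd, sub_sub_cancel, add_zero]
    field_simp
  · intro i hi
    have hi1 : 1 ≠ i := by
      have := (mem_Icc.1 hi).1
      omega
    simp [evec, hi1]

lemma sum_Icc_two_le_mul {s : ℕ → ℝ} (hs : Antitone s) (hb : 1 ≤ b) :
    ∑ i ∈ Icc 2 b, s i ≤ ((b : ℝ) - 1) * s 2 := by
  calc ∑ i ∈ Icc 2 b, s i ≤ ∑ _i ∈ Icc 2 b, s 2 := sum_le_sum fun i hi => hs (mem_Icc.1 hi).1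
    _ = ((b : ℝ) - 1) * s 2 := by
      rw [sum_const, Nat.card_Icc, nsmul_eq_mul, Nat.cast_sub (by omega)]
      push_cast
      ring

lemma gen_lyap_le_of_sum_le (alg : Algo N b) (s : State N b) (hN : N ≠ 0) (hb : 2 ≤ b)
    (hlam : 0 ≤ lam α N) (h : ∑ i ∈ Icc 2 b, s.val i ≤ thr α N b - s.val 1) :
    gen N b α alg (lyap N b α) s.val ≤ lam α N * (alg.A 1 s.val - alg.A b s.val) - s.val 2 :=
  (gen_min_le_gen_left (φ := fun x => ∑ i ∈ Icc 2 b, x i) alg s hlam h).trans_eq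
    (gen_sum_Icc_two alg s.val hN hb (s.2.2.1 _ (by omega)))

lemma gen_lyap_le_of_thr_sub_le (alg : Algo N b) (s : State N b) (hN : N ≠ 0) (hb : 1 ≤ b)
    (hlam : 0 ≤ lam α N) (h : thr α N b - s.val 1 ≤ ∑ i ∈ Icc 2 b, s.val i) :
    gen N b α alg (lyap N b α) s.val ≤ -(lam α N * (1 - alg.A 1 s.val)) + (s.val 1 - s.val 2) := by
  rw [← alg.a_zero s, ← gen_const_sub_apply_one alg s.val (thr α N b) hN hb]
  exact gen_min_le_gen_right (φ := fun x => ∑ i ∈ Icc 2 b, x i) alg s hlam h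

end Drift

theorem stmt4_general (N b : ℕ) (hN : 2 ≤ N) (hb : 2 ≤ b) (α : ℝ) (hα₁ : 0 < α)
    (alg : Algo N b) (halg : GoodAlgo N b α alg)
    (s : State N b) (hV : Real.log N / Real.sqrt N ≤ lyap N b α s.val) :
    gen N b α alg (lyap N b α) s.val
      ≤ -(1 / (2 * ((b : ℝ) - 1))) * (Real.log N / Real.sqrt N) + 1 / Real.sqrt N := by
  set L := Real.log N / Real.sqrt N
  set c := 1 / (2 * ((b : ℝ) - 1))
  have hlam := lam_nonneg (α := α) (by omega : 1 ≤ N) hα₁.le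
  have hb1 : (1 : ℝ) < b := by exact_mod_cast hb
  have hL : 0 ≤ L :=
    div_nonneg (Real.log_nonneg (by exact_mod_cast (by omega : 1 ≤ N))) (Real.sqrt_nonneg _)
  have hcL : 0 ≤ c * L := mul_nonneg (div_pos one_pos (by linarith)).le hL
  obtain ⟨hL_sum, hL_thr⟩ := le_min_iff.1 hV
  have hs2 : 2 * (c * L) ≤ s.val 2 := by
    have hcL_eq : 2 * (c * L) = L / ((b : ℝ) - 1) := by
      unfold c
      field_simp
    rw [hcL_eq, div_le_iff₀ (sub_pos.2 hb1)]
    linarith [hL_sum.trans (sum_Icc_two_le_mul s.2.antitone (by omega))]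
  have hs1 : s.val 1 ≤ lam α N + c * L := by
    have : thr α N b = lam α N + (1 + c) * L := by unfold thr kcoef L c; ring
    linarith
  have hA1 : alg.A 1 s.val ≤ 1 / Real.sqrt N := halg s (by linarith)
  have hAb : 0 ≤ alg.A b s.val := alg.a_nonneg s
  have hAb1 : alg.A b s.val ≤ alg.A 1 s.val := alg.A_le_A_one s (by omega) le_rfl
  rcases le_total (∑ i ∈ Finset.Icc 2 b, s.val i) (thr α N b - s.val 1) with h | h
  · refine (gen_lyap_le_of_sum_le alg s (by omega) hb hlam h).trans ?_
    linarith [mul_le_of_le_one_left (sub_nonneg.2 hAb1) (lam_le_one (α := α) (N := N))]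
  · refine (gen_lyap_le_of_thr_sub_le alg s (by omega) (by omega) hlam h).trans ?_
    linarith [mul_le_of_le_one_left (hAb.trans hAb1) (lam_le_one (α := α) (N := N))]

theorem stmt4 (N b : ℕ) (hN : 2 ≤ N) (hb : 2 ≤ b) (α : ℝ) (hα₁ : 0 < α)
    (hα₂ : α < 1 / 2) (alg : Algo N b) (halg : GoodAlgo N b α alg)
    (s : State N b) (hV : Real.log N / Real.sqrt N ≤ lyap N b α s.val) :
    gen N b α alg (lyap N b α) s.val
      ≤ -(1 / (2 * ((b : ℝ) - 1))) * (Real.log N / Real.sqrt N) + 1 / Real.sqrt N :=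
  stmt4_general N b hN hb α hα₁ alg halg s hV
end
end

section
/- Let b : ℕ → ℕ satisfy b(N) ≥ 2 for all N and b(N)/√(log N) → 0 as N → ∞. Then for all sufficiently large N, ( 1 + (1/(2(b(N)−1)))·(log N/√N) − 1/√N )^{ −( √N·log N/(8(b(N)−1)) + 1 ) } ≤ exp( −(log N)²/(32(b(N)−1)²) + log N/(16(b(N)−1)) ). -/
/-! With `B = b(N) - 1`, `L = log N`, `s = √N`, `γ = L / (2Bs) - 1/s` and `j = sL / (8B)`, the
right-hand side is exactly `exp (-(j γ / 2))`. Once `2B ≤ L`, which the growth condition on `b`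
gives for large `N`, we have `0 ≤ γ ≤ 1`, so `log (1 + γ) ≥ γ / 2` and
`(1 + γ)^{-(j+1)} ≤ exp (-j log (1 + γ)) ≤ exp (-(j γ / 2))`. -/

open Filter

noncomputable section

namespace Real

lemma half_le_log_one_add {x : ℝ} (h0 : 0 ≤ x) (h1 : x ≤ 1) : x / 2 ≤ log (1 + x) := by
  have hx : 0 < 1 + x := by linarith
  calc x / 2 ≤ x / (1 + x) := div_le_div_of_nonneg_left h0 hx (by linarith)
    _ = 1 - (1 + x)⁻¹ := by field_simp; ring
    _ ≤ log (1 + x) := one_sub_inv_le_log_of_pos hx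

lemma one_add_rpow_neg_le_exp {x j : ℝ} (h0 : 0 ≤ x) (h1 : x ≤ 1) (hj : 0 ≤ j) :
    (1 + x) ^ (-(j + 1)) ≤ exp (-(j * (x / 2))) := by
  have hlog : 0 ≤ log (1 + x) := log_nonneg (by linarith)
  rw [rpow_def_of_pos (by linarith), exp_le_exp]
  nlinarith [mul_le_mul_of_nonneg_left (half_le_log_one_add h0 h1) hj]

lemma log_le_two_mul_sqrt {x : ℝ} (hx : 0 ≤ x) : log x ≤ 2 * √x := by
  have := log_le_rpow_div hx (by norm_num : (0 : ℝ) < 1 / 2)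
  rwa [← sqrt_eq_rpow, div_div_eq_mul_div, div_one, mul_comm] at this

end Real

open Real

lemma geometric_tail_le_exp {B L s : ℝ} (hB : 1 ≤ B) (hs : 0 < s) (hBL : 2 * B ≤ L)
    (hLs : L ≤ 2 * s) :
    (1 + (1 / (2 * B)) * (L / s) - 1 / s) ^ (-(s * L / (8 * B) + 1))
      ≤ exp (-L ^ 2 / (32 * B ^ 2) + L / (16 * B)) := by
  set γ := (1 / (2 * B)) * (L / s) - 1 / s with hγ
  have hγ0 : 0 ≤ γ := by
    rw [hγ, sub_nonneg, show 1 / (2 * B) * (L / s) = L / (2 * B) / s by ring]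
    gcongr
    rw [le_div_iff₀ (by linarith)]
    linarith
  have hγ1 : γ ≤ 1 := by
    have hfirst : 1 / (2 * B) * (L / s) ≤ 1 := by
      rw [div_mul_div_comm, one_mul, div_le_one (by positivity)]
      nlinarith
    have : 0 ≤ 1 / s := by positivity
    linarith
  have hexp : s * L / (8 * B) * (γ / 2) = L ^ 2 / (32 * B ^ 2) - L / (16 * B) := by
    rw [hγ]
    field_simp
    ring
  rw [show 1 + 1 / (2 * B) * (L / s) - 1 / s = 1 + γ by ring,
    show -L ^ 2 / (32 * B ^ 2) + L / (16 * B) = -(s * L / (8 * B) * (γ / 2)) by rw [hexp]; ring]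
  exact one_add_rpow_neg_le_exp hγ0 hγ1
    (div_nonneg (mul_nonneg hs.le (by linarith)) (by linarith))

lemma eventually_two_mul_le_log (b : ℕ → ℕ)
    (hbo : Tendsto (fun N : ℕ => (b N : ℝ) / √(log N)) atTop (nhds 0)) :
    ∀ᶠ N : ℕ in atTop, 2 * (b N : ℝ) ≤ log N := by
  have hlog : ∀ᶠ N : ℕ in atTop, 1 ≤ log N :=
    (tendsto_log_atTop.comp tendsto_natCast_atTop_atTop).eventually_ge_atTop 1
  filter_upwards [hbo.eventually (eventually_le_nhds (by norm_num : (0 : ℝ) < 1 / 2)), hlog]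
    with N hsmall hL
  have hsqrt : 0 < √(log N) := sqrt_pos.mpr (by linarith)
  rw [div_le_iff₀ hsqrt] at hsmall
  have : √(log N) ≤ log N := sqrt_le_self_iff.mpr (Or.inr hL)
  linarith

theorem stmt7 (b : ℕ → ℕ) (hb : ∀ N, 2 ≤ b N)
    (hbo : Tendsto (fun N : ℕ => (b N : ℝ) / Real.sqrt (Real.log N)) atTop (nhds 0)) :
    ∃ N₀ : ℕ, ∀ N : ℕ, N₀ ≤ N →
      (1 + (1 / (2 * ((b N : ℝ) - 1))) * (Real.log N / Real.sqrt N) - 1 / Real.sqrt N)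
          ^ (-(Real.sqrt N * Real.log N / (8 * ((b N : ℝ) - 1)) + 1))
        ≤ Real.exp (-(Real.log N) ^ 2 / (32 * ((b N : ℝ) - 1) ^ 2)
            + Real.log N / (16 * ((b N : ℝ) - 1))) := by
  obtain ⟨N₀, hN₀⟩ :=
    ((eventually_two_mul_le_log b hbo).and (eventually_gt_atTop 0)).exists_forall_of_atTop
  refine ⟨N₀, fun N hN => ?_⟩
  obtain ⟨hlog, hpos⟩ := hN₀ N hN
  have hb2 : (2 : ℝ) ≤ b N := by exact_mod_cast hb N
  exact geometric_tail_le_exp (by linarith) (sqrt_pos.mpr (by exact_mod_cast hpos))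
    (by linarith) (log_le_two_mul_sqrt (Nat.cast_nonneg N))
end
end

section
/- Let α ∈ (0, 1/2) be a real number and let b : ℕ → ℕ satisfy b(N) ≥ 2 for all N and b(N)/√(log N) → 0 as N → ∞. Then there exists N₀ such that for every integer N ≥ N₀, every load balancing algorithm on the N-server state space with parameter b = b(N) that satisfies A₁(s) ≤ 1/√N for every s ∈ 𝒮 with s₁ ≤ λ + k·log N/√N, and every stationary distribution π, the probability that all buffers are full satisfies Pr_π( Σ_{i=1}^{b} S_i = b ) ≤ 29/(√N · log N). -/
open Filter

noncomputable section

/-- A stationary distribution of the chain. -/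
def IsStationaryDistr (N b : ℕ) (α : ℝ) (alg : Algo N b) (μ : State N b → ℝ) : Prop :=
  (∀ s, 0 ≤ μ s ∧ μ s ≤ 1) ∧ (∑' s : State N b, μ s) = 1 ∧
    ∀ g : (ℕ → ℝ) → ℝ, (∑' s : State N b, μ s * gen N b α alg g s.val) = 0

/-!
Seen through its total load `N · ∑ sᵢ`, the chain is a birth–death process: the load rises by
one at rate `λN(1 - A_b) ≤ λN` and falls by one at rate `N s₁`, and when `j` of the `N b` buffer
slots are free, `s₁ ≥ 1 - j/N`. Balancing the stationary flow across each level therefore gives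
`(N - j) pⱼ ≤ λN pⱼ₊₁` for the probability `pⱼ` of `j` free slots. For `j ≤ N^{1-α}/2` this is
a geometric growth with ratio at least `1/(1 - N^{-α}/2)`, so
`p₀ ≤ (1 - N^{-α}/2)^{N^{1-α}/2} ≤ exp(-N^{1-2α}/4)`, which is eventually below
`29/(√N log N)` because `α < 1/2`.
-/

namespace LoadBalancing

variable {N b : ℕ}

def load (b : ℕ) (v : ℕ → ℝ) : ℝ := ∑ i ∈ Finset.Icc 1 b, v i

namespace State

theorem antitone (s : State N b) : Antitone s.val := by
  refine antitone_nat_of_succ_le fun i => ?_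
  rcases le_or_gt i b with hi | hi
  · exact s.2.2.2.1 i hi
  · rw [s.2.2.1 i hi, s.2.2.1 (i + 1) (by omega)]

theorem le_one (s : State N b) (i : ℕ) : s.val i ≤ 1 :=
  s.2.1 ▸ State.antitone s (Nat.zero_le i)

theorem nonneg (s : State N b) (i : ℕ) : 0 ≤ s.val i :=
  s.2.2.1 (i + b + 1) (by omega) ▸ State.antitone s (by omega)

theorem exists_int_natCast_mul_load (s : State N b) :
    ∃ m : ℤ, (N : ℝ) * load b s.val = m := by
  choose m hm using s.2.2.2.2
  exact ⟨∑ i ∈ Finset.Icc 1 b, m i, by simp [load, Finset.mul_sum, hm]⟩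

theorem load_sub_le (hb : 1 ≤ b) (s : State N b) : load b s.val - (b - 1) ≤ s.val 1 := by
  have hrest : ∑ i ∈ Finset.Ioc 1 b, s.val i ≤ b - 1 := by
    calc ∑ i ∈ Finset.Ioc 1 b, s.val i ≤ ∑ _i ∈ Finset.Ioc 1 b, (1 : ℝ) :=
          Finset.sum_le_sum fun i _ => State.le_one s i
      _ = b - 1 := by simp [Nat.cast_sub hb]
  have hsplit : load b s.val = s.val 1 + ∑ i ∈ Finset.Ioc 1 b, s.val i := by
    rw [load, ← Finset.add_sum_Ioc_eq_sum_Icc hb]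
  linarith

theorem finite (hN : N ≠ 0) : Finite (State N b) := by
  let T : Set ℝ := (fun m : ℤ => m / N) '' Set.Icc 0 N
  have hT : ∀ (s : State N b) i, s.val i ∈ T := by
    intro s i
    obtain ⟨m, hm⟩ := s.2.2.2.2 i
    have h0 : (0 : ℝ) ≤ m := hm ▸ mul_nonneg (Nat.cast_nonneg N) (State.nonneg s i)
    have h1 : (m : ℝ) ≤ N := hm ▸ mul_le_of_le_one_right (Nat.cast_nonneg N) (State.le_one s i)
    refine ⟨m, ⟨by exact_mod_cast h0, by exact_mod_cast h1⟩, ?_⟩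
    show (m : ℝ) / N = s.val i
    rw [← hm, mul_div_cancel_left₀ _ (by exact_mod_cast hN)]
  have hfin : {s | IsState N b s}.Finite := by
    refine Set.Finite.of_finite_image (f := fun s (i : Fin (b + 1)) => s i) ?_ ?_
    · refine (Set.Finite.pi (t := fun _ => T) fun _ => (Set.finite_Icc _ _).image _).subset ?_
      rintro _ ⟨s, hs, rfl⟩ i -
      exact hT ⟨s, hs⟩ i
    · intro s hs t ht hst
      funext i
      rcases le_or_gt i b with hi | hi
      · exact congrFun hst ⟨i, by omega⟩
      · rw [hs.2.1 i hi, ht.2.1 i hi]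
  exact hfin.to_subtype

end State

theorem natCast_mul_load_add_evec (hN : N ≠ 0) {i : ℕ} (hi : i ∈ Finset.Icc 1 b)
    (v : ℕ → ℝ) : (N : ℝ) * load b (v + evec N i) = N * load b v + 1 := by
  simp [load, evec, Finset.sum_add_distrib, hi, mul_add, hN]

theorem natCast_mul_load_sub_evec (hN : N ≠ 0) {i : ℕ} (hi : i ∈ Finset.Icc 1 b)
    (v : ℕ → ℝ) : (N : ℝ) * load b (v - evec N i) = N * load b v - 1 := by
  simp [load, evec, Finset.sum_sub_distrib, hi, mul_sub, hN]

theorem Algo.sum_sub_succ (alg : Algo N b) (s : State N b) :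
    ∑ i ∈ Finset.Icc 1 b, (alg.A (i - 1) s.val - alg.A i s.val) = 1 - alg.A b s.val := by
  rcases Nat.eq_zero_or_pos b with rfl | hb
  · simp [alg.a_zero s]
  have := Finset.sum_Icc_sub hb (fun i => -alg.A (i - 1) s.val)
  simp only [Nat.add_sub_cancel, neg_sub_neg] at this
  rw [this, Nat.sub_self, alg.a_zero s]

theorem State.sum_sub_succ (s : State N b) :
    ∑ i ∈ Finset.Icc 1 b, (s.val i - s.val (i + 1)) = s.val 1 := by
  rcases Nat.eq_zero_or_pos b with rfl | hb
  · simp [s.2.2.1 1 one_pos]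
  have := Finset.sum_Icc_sub hb (fun i => -s.val i)
  simp only [neg_sub_neg] at this
  rw [this, s.2.2.1 (b + 1) (by omega)]
  ring

theorem gen_comp_load (α : ℝ) (alg : Algo N b) (hN : N ≠ 0) (φ : ℝ → ℝ) (s : State N b) :
    gen N b α alg (fun v => φ (N * load b v)) s.val =
      lam α N * N * (1 - alg.A b s.val) * (φ (N * load b s.val + 1) - φ (N * load b s.val))
        + N * s.val 1 * (φ (N * load b s.val - 1) - φ (N * load b s.val)) := by
  rw [gen, ← Algo.sum_sub_succ alg s, ← State.sum_sub_succ s, Finset.mul_sum, Finset.mul_sum,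
    Finset.sum_mul, Finset.sum_mul, ← Finset.sum_add_distrib]
  refine Finset.sum_congr rfl fun i hi => ?_
  rw [natCast_mul_load_add_evec hN hi, natCast_mul_load_sub_evec hN hi]

theorem ite_le_add_one_sub_ite_le (c m : ℤ) :
    ((if (c : ℝ) ≤ m + 1 then 1 else 0) - (if (c : ℝ) ≤ m then 1 else 0) : ℝ) =
      if (m : ℝ) = c - 1 then 1 else 0 := by
  have h1 : (c : ℝ) ≤ m + 1 ↔ c ≤ m + 1 := by exact_mod_cast Iff.rfl
  have h2 : (c : ℝ) ≤ m ↔ c ≤ m := Int.cast_le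
  have h3 : (m : ℝ) = c - 1 ↔ m = c - 1 := by exact_mod_cast Iff.rfl
  simp only [h1, h2, h3]
  split_ifs <;> first | omega | norm_num

theorem ite_le_sub_one_sub_ite_le (c m : ℤ) :
    ((if (c : ℝ) ≤ m - 1 then 1 else 0) - (if (c : ℝ) ≤ m then 1 else 0) : ℝ) =
      -if (m : ℝ) = c then 1 else 0 := by
  have h1 : (c : ℝ) ≤ m - 1 ↔ c ≤ m - 1 := by exact_mod_cast Iff.rfl
  have h2 : (c : ℝ) ≤ m ↔ c ≤ m := Int.cast_le
  have h3 : (m : ℝ) = c ↔ m = c := Int.cast_inj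
  simp only [h1, h2, h3]
  split_ifs <;> first | omega | norm_num

/-- Stationarity tested against the indicator of `{N · load ≥ c}`. -/
theorem IsStationaryDistr.flow_balance {α : ℝ} {alg : Algo N b} {μ : State N b → ℝ}
    (hμ : IsStationaryDistr N b α alg μ) (hN : N ≠ 0) (c : ℤ) :
    ∑' s, μ s * (lam α N * N * (1 - alg.A b s.val) *
        if (N : ℝ) * load b s.val = c - 1 then 1 else 0) =
      ∑' s, μ s * (N * s.val 1 * if (N : ℝ) * load b s.val = c then 1 else 0) := by
  have := State.finite (b := b) hN
  let φ : ℝ → ℝ := fun x => if (c : ℝ) ≤ x then 1 else 0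
  have hcut := hμ.2.2 fun v => φ (N * load b v)
  simp only [gen_comp_load α alg hN φ] at hcut
  rw [← sub_eq_zero, ← Summable.of_finite.tsum_sub Summable.of_finite]
  refine Eq.trans (tsum_congr fun s => ?_) hcut
  obtain ⟨m, hm⟩ := State.exists_int_natCast_mul_load s
  simp only [hm, φ, ite_le_add_one_sub_ite_le, ite_le_sub_one_sub_ite_le]
  ring

/-- The stationary probability that exactly `j` of the `N b` buffer slots are free. -/
def freeSlotsProb (μ : State N b → ℝ) (j : ℕ) : ℝ :=
  ∑' s : State N b, if (N : ℝ) * load b s.val = b * N - j then μ s else 0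

theorem freeSlotsProb_nonneg {μ : State N b → ℝ} (hμ : ∀ s, 0 ≤ μ s) (j : ℕ) :
    0 ≤ freeSlotsProb μ j :=
  tsum_nonneg fun s => by split_ifs <;> simp [hμ s]

theorem IsStationaryDistr.freeSlotsProb_le_one {α : ℝ} {alg : Algo N b} {μ : State N b → ℝ}
    (hμ : IsStationaryDistr N b α alg μ) (hN : N ≠ 0) (j : ℕ) : freeSlotsProb μ j ≤ 1 := by
  have := State.finite (b := b) hN
  rw [← hμ.2.1]
  exact Summable.of_finite.tsum_le_tsum (fun s => by split_ifs <;> simp [(hμ.1 s).1])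
    Summable.of_finite

theorem IsStationaryDistr.freeSlotsProb_le {α : ℝ} {alg : Algo N b} {μ : State N b → ℝ}
    (hμ : IsStationaryDistr N b α alg μ) (hN : N ≠ 0) (hb : 1 ≤ b) (hlam : 0 ≤ lam α N)
    (j : ℕ) : (N - j) * freeSlotsProb μ j ≤ lam α N * N * freeSlotsProb μ (j + 1) := by
  have := State.finite (b := b) hN
  have hμ0 (s : State N b) : 0 ≤ μ s := (hμ.1 s).1
  have hbal := IsStationaryDistr.flow_balance hμ hN (b * N - j)
  have hc : (b : ℝ) * N - ((j + 1 : ℕ) : ℝ) = ((b * N - j : ℤ) : ℝ) - 1 := by push_cast; ring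
  have hc' : (b : ℝ) * N - j = ((b * N - j : ℤ) : ℝ) := by push_cast; ring
  rw [freeSlotsProb, freeSlotsProb, hc, hc', ← tsum_mul_left, ← tsum_mul_left]
  calc _ ≤ _ := Summable.of_finite.tsum_le_tsum (fun s => ?_) Summable.of_finite
    _ = _ := hbal.symm
    _ ≤ _ := Summable.of_finite.tsum_le_tsum (fun s => ?_) Summable.of_finite
  · split_ifs with hs
    · have hs1 := mul_le_mul_of_nonneg_left (State.load_sub_le hb s) (Nat.cast_nonneg N)
      rw [mul_sub, hs, ← hc'] at hs1
      nlinarith [hμ0 s]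
    · simp
  · have hA := alg.a_nonneg s
    split_ifs
    · nlinarith [mul_nonneg (mul_nonneg hlam (Nat.cast_nonneg N)) (mul_nonneg (hμ0 s) hA)]
    · simp

theorem freeSlotsProb_zero (hN : N ≠ 0) (μ : State N b → ℝ) :
    freeSlotsProb μ 0 = ∑' s : State N b, if load b s.val = b then μ s else 0 := by
  refine tsum_congr fun s => ?_
  simp only [Nat.cast_zero, sub_zero, mul_comm (b : ℝ),
    mul_right_inj' (Nat.cast_ne_zero.mpr hN)]

theorem le_pow_mul_of_le_mul_succ {W : ℕ → ℝ} {r : ℝ} (hr : 0 ≤ r) {J : ℕ}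
    (h : ∀ j < J, W j ≤ r * W (j + 1)) : W 0 ≤ r ^ J * W J := by
  induction J with
  | zero => simp
  | succ J ih =>
    calc W 0 ≤ r ^ J * W J := ih fun j hj => h j (by omega)
      _ ≤ r ^ J * (r * W (J + 1)) := mul_le_mul_of_nonneg_left (h J J.lt_succ_self) (by positivity)
      _ = r ^ (J + 1) * W (J + 1) := by ring

theorem le_mul_of_sub_mul_le {n j a x y : ℝ} (hn : 0 < n) (ha : a < 1) (hy : 0 ≤ y)
    (hx : 0 ≤ x) (hj : j ≤ n * a / 2) (h : (n - j) * x ≤ (1 - a) * n * y) :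
    x ≤ (1 - a / 2) * y := by
  have hpos : 0 < n * (1 - a / 2) := by nlinarith
  refine le_of_mul_le_mul_left ?_ hpos
  calc n * (1 - a / 2) * x ≤ (n - j) * x := by nlinarith
    _ ≤ (1 - a) * n * y := h
    _ ≤ n * (1 - a / 2) * ((1 - a / 2) * y) := by nlinarith [sq_nonneg a, mul_nonneg hn.le hy]

theorem IsStationaryDistr.freeSlotsProb_zero_le {α : ℝ} {alg : Algo N b} {μ : State N b → ℝ}
    (hμ : IsStationaryDistr N b α alg μ) (hα : 0 < α) (hN : 1 < N) (hb : 1 ≤ b) :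
    freeSlotsProb μ 0 ≤ Real.exp (-(N : ℝ) ^ (1 - 2 * α) / 4) := by
  have hN0 : N ≠ 0 := by omega
  have hNpos : (0 : ℝ) < N := by positivity
  set a : ℝ := (N : ℝ) ^ (-α)
  have ha0 : 0 < a := by positivity
  have ha1 : a < 1 := Real.rpow_lt_one_of_one_lt_of_neg (by exact_mod_cast hN) (by linarith)
  have hNa : (N : ℝ) * a * a = (N : ℝ) ^ (1 - 2 * α) := by
    have : (N : ℝ) ^ (1 - 2 * α) = (N : ℝ) ^ (1 : ℝ) * a * a := by
      rw [← Real.rpow_add hNpos, ← Real.rpow_add hNpos]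
      ring_nf
    rw [this, Real.rpow_one]
  set J := ⌈N * a / 2⌉₊
  have hp0 := freeSlotsProb_nonneg fun s => (hμ.1 s).1
  have hstep : ∀ j < J, freeSlotsProb μ j ≤ (1 - a / 2) * freeSlotsProb μ (j + 1) := fun j hj =>
    le_mul_of_sub_mul_le hNpos ha1 (hp0 _) (hp0 _) (Nat.lt_ceil.mp hj).le
      (IsStationaryDistr.freeSlotsProb_le hμ hN0 hb (by linarith [show lam α N = 1 - a from rfl]) j)
  calc freeSlotsProb μ 0 ≤ (1 - a / 2) ^ J * freeSlotsProb μ J :=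
        le_pow_mul_of_le_mul_succ (by linarith) hstep
    _ ≤ (1 - a / 2) ^ J := mul_le_of_le_one_right (by bound)
        (IsStationaryDistr.freeSlotsProb_le_one hμ hN0 J)
    _ ≤ Real.exp (-(a / 2)) ^ J := pow_le_pow_left₀ (by linarith) (Real.one_sub_le_exp_neg _) J
    _ = Real.exp (-(J * (a / 2))) := by rw [← Real.exp_nat_mul]; ring_nf
    _ ≤ Real.exp (-(N : ℝ) ^ (1 - 2 * α) / 4) := by
        gcongr
        rw [← hNa]
        nlinarith [Nat.le_ceil ((N : ℝ) * a / 2)]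

theorem eventually_exp_neg_rpow_le {δ : ℝ} (hδ : 0 < δ) :
    ∀ᶠ N : ℕ in atTop, Real.exp (-(N : ℝ) ^ δ / 4) ≤ 29 / (Real.sqrt N * Real.log N) := by
  have hdecay := (tendsto_rpow_mul_exp_neg_mul_atTop_nhds_zero (2 / δ) (1 / 4) (by norm_num)).comp
    ((tendsto_rpow_atTop hδ).comp tendsto_natCast_atTop_atTop)
  filter_upwards [hdecay.eventually_le_const zero_lt_one, eventually_gt_atTop 1] with N hN1 hN
  have hN' : (1 : ℝ) < N := by exact_mod_cast hN
  have hpow : ((N : ℝ) ^ δ) ^ (2 / δ) = (N : ℝ) ^ 2 := by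
    rw [← Real.rpow_mul (by positivity), mul_div_cancel₀ _ hδ.ne']
    exact Real.rpow_two _
  simp only [Function.comp_apply, hpow] at hN1
  have hsqrt : Real.sqrt N ≤ N := Real.sqrt_le_self_iff.mpr (Or.inr hN'.le)
  have hlog : Real.log N ≤ N := Real.log_le_self (by positivity)
  have hlog0 : 0 < Real.log N := Real.log_pos hN'
  rw [le_div_iff₀ (by positivity)]
  calc Real.exp (-(N : ℝ) ^ δ / 4) * (Real.sqrt N * Real.log N)
      ≤ Real.exp (-(N : ℝ) ^ δ / 4) * (N : ℝ) ^ 2 := by gcongr; nlinarith [Real.sqrt_nonneg N]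
    _ ≤ 29 := by
      rw [show -(N : ℝ) ^ δ / 4 = -(1 / 4) * (N : ℝ) ^ δ by ring]
      linarith

end LoadBalancing

open LoadBalancing in
theorem stmt9_general (α : ℝ) (hα₁ : 0 < α) (hα₂ : α < 1 / 2) (b : ℕ → ℕ)
    (hb : ∀ N, 2 ≤ b N) :
    ∃ N₀ : ℕ, ∀ N : ℕ, N₀ ≤ N → ∀ alg : Algo N (b N), GoodAlgo N (b N) α alg →
      ∀ μ : State N (b N) → ℝ, IsStationaryDistr N (b N) α alg μ →
        (∑' s : State N (b N),
            if (∑ i ∈ Finset.Icc 1 (b N), s.val i) = (b N : ℝ) then μ s else 0)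
          ≤ 29 / (Real.sqrt N * Real.log N) := by
  obtain ⟨N₀, hN₀⟩ := eventually_atTop.mp
    ((eventually_exp_neg_rpow_le (by linarith : 0 < 1 - 2 * α)).and (eventually_gt_atTop 1))
  refine ⟨N₀, fun N hN alg _ μ hμ => ?_⟩
  obtain ⟨hexp, hN1⟩ := hN₀ N hN
  calc _ = freeSlotsProb μ 0 := (freeSlotsProb_zero (by omega) μ).symm
    _ ≤ Real.exp (-(N : ℝ) ^ (1 - 2 * α) / 4) :=
      IsStationaryDistr.freeSlotsProb_zero_le hμ hα₁ hN1 (by linarith [hb N])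
    _ ≤ _ := hexp

theorem stmt9 (α : ℝ) (hα₁ : 0 < α) (hα₂ : α < 1 / 2) (b : ℕ → ℕ)
    (hb : ∀ N, 2 ≤ b N)
    (hbo : Tendsto (fun N : ℕ => (b N : ℝ) / Real.sqrt (Real.log N)) atTop (nhds 0)) :
    ∃ N₀ : ℕ, ∀ N : ℕ, N₀ ≤ N → ∀ alg : Algo N (b N), GoodAlgo N (b N) α alg →
      ∀ μ : State N (b N) → ℝ, IsStationaryDistr N (b N) α alg μ →
        (∑' s : State N (b N),
            if (∑ i ∈ Finset.Icc 1 (b N), s.val i) = (b N : ℝ) then μ s else 0)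
          ≤ 29 / (Real.sqrt N * Real.log N) :=
  stmt9_general α hα₁ hα₂ b hb
end
end
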